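/- arXiv:math/0402331 — 5 statements merged into one kernel-verified Lean document; each statement's English description precedes it below -/
import Mathlib

section
/- Let ρ, φ : ω → ℝ be smooth functions on an open set ω ⊆ ℝ² with ρ > 0, satisfying ρ_x − ρ φ_y = cos(2φ) and ρ_y + ρ φ_x = −sin(2φ). Then ρ_x² + ρ_y² + 2ρ Δρ = 1 + 3ρ²(φ_x² + φ_y²), and in particular ρ_x² + ρ_y² + 2ρ Δρ ≥ 1. -/
/-- Partial derivative in the x-direction of a real-valued function on ℂ ≅ ℝ². -/
noncomputable def pdx (f : ℂ → ℝ) (z : ℂ) : ℝ := fderiv ℝ f z 1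

/-- Partial derivative in the y-direction. -/
noncomputable def pdy (f : ℂ → ℝ) (z : ℂ) : ℝ := fderiv ℝ f z Complex.I

/-- The Laplacian Δf = f_xx + f_yy on ℂ ≅ ℝ². -/
noncomputable def lap (f : ℂ → ℝ) (z : ℂ) : ℝ :=
  fderiv ℝ (fun w => fderiv ℝ f w 1) z 1 +
  fderiv ℝ (fun w => fderiv ℝ f w Complex.I) z Complex.I

lemma fderiv_pd (f : ℂ → ℝ) (z : ℂ) (hf : ContDiffAt ℝ (⊤ : ℕ∞) f z) (u v : ℂ) :
    fderiv ℝ (fun w => fderiv ℝ f w v) z u = fderiv ℝ (fderiv ℝ f) z u v := by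
  have hd : DifferentiableAt ℝ (fderiv ℝ f) z :=
    (hf.fderiv_right (m := (⊤ : ℕ∞)) (by simp)).differentiableAt (by simp)
  rw [fderiv_clm_apply hd (differentiableAt_const v)]
  simp

theorem stmt1 (ω : Set ℂ) (hω : IsOpen ω) (ρ φ : ℂ → ℝ)
    (hρ : ContDiffOn ℝ (⊤ : ℕ∞) ρ ω) (hφ : ContDiffOn ℝ (⊤ : ℕ∞) φ ω)
    (hρpos : ∀ z ∈ ω, 0 < ρ z)
    (heq1 : ∀ z ∈ ω, pdx ρ z - ρ z * pdy φ z = Real.cos (2 * φ z))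
    (heq2 : ∀ z ∈ ω, pdy ρ z + ρ z * pdx φ z = -Real.sin (2 * φ z)) :
    ∀ z ∈ ω,
      (pdx ρ z) ^ 2 + (pdy ρ z) ^ 2 + 2 * ρ z * lap ρ z =
        1 + 3 * (ρ z) ^ 2 * ((pdx φ z) ^ 2 + (pdy φ z) ^ 2) ∧
      1 ≤ (pdx ρ z) ^ 2 + (pdy ρ z) ^ 2 + 2 * ρ z * lap ρ z := by
  intro z hz
  have hnz : ω ∈ nhds z := hω.mem_nhds hz
  have hρz : ContDiffAt ℝ (⊤ : ℕ∞) ρ z := (hρ z hz).contDiffAt (hω.mem_nhds_iff.mpr hz)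
  have hφz : ContDiffAt ℝ (⊤ : ℕ∞) φ z := (hφ z hz).contDiffAt (hω.mem_nhds_iff.mpr hz)
  -- differentiability facts
  have hρd : DifferentiableAt ℝ ρ z := hρz.differentiableAt (by simp)
  have hφd : DifferentiableAt ℝ φ z := hφz.differentiableAt (by simp)
  have hρ1 : DifferentiableAt ℝ (fderiv ℝ ρ) z :=
    (hρz.fderiv_right (m := (⊤ : ℕ∞)) (by simp)).differentiableAt (by simp)
  have hφ1 : DifferentiableAt ℝ (fderiv ℝ φ) z :=
    (hφz.fderiv_right (m := (⊤ : ℕ∞)) (by simp)).differentiableAt (by simp)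
  have hρx : DifferentiableAt ℝ (fun w => fderiv ℝ ρ w 1) z :=
    hρ1.clm_apply (differentiableAt_const _)
  have hρy : DifferentiableAt ℝ (fun w => fderiv ℝ ρ w Complex.I) z :=
    hρ1.clm_apply (differentiableAt_const _)
  have hφx : DifferentiableAt ℝ (fun w => fderiv ℝ φ w 1) z :=
    hφ1.clm_apply (differentiableAt_const _)
  have hφy : DifferentiableAt ℝ (fun w => fderiv ℝ φ w Complex.I) z :=
    hφ1.clm_apply (differentiableAt_const _)
  -- abbreviations
  set r := ρ z with hr
  set rx := fderiv ℝ ρ z 1 with hrx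
  set ry := fderiv ℝ ρ z Complex.I with hry
  set px := fderiv ℝ φ z 1 with hpx
  set py := fderiv ℝ φ z Complex.I with hpy
  set R := fderiv ℝ (fderiv ℝ ρ) z with hR
  set P := fderiv ℝ (fderiv ℝ φ) z with hP
  have hsymm : P 1 Complex.I = P Complex.I 1 := by
    exact (hφz.isSymmSndFDerivAt (by rw [minSmoothness_of_isRCLikeNormedField]; exact WithTop.coe_le_coe.mpr le_top)) 1 Complex.I
  -- fderiv of RHS of eq1 : cos (2 * φ)
  have hcos : HasFDerivAt (fun w => Real.cos (2 * φ w))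
      ((-Real.sin (2 * φ z)) • ((2:ℝ) • fderiv ℝ φ z)) z :=
    by have h := (Real.hasDerivAt_cos (2 * φ z)).comp_hasFDerivAt z
        (hφd.hasFDerivAt.const_mul 2); exact h
  have hsin : HasFDerivAt (fun w => -Real.sin (2 * φ w))
      (-((Real.cos (2 * φ z)) • ((2:ℝ) • fderiv ℝ φ z))) z :=
    by have h := ((Real.hasDerivAt_sin (2 * φ z)).comp_hasFDerivAt z
        (hφd.hasFDerivAt.const_mul 2)).neg; exact h
  -- LHS of eq1
  have hF1 : DifferentiableAt ℝ (fun w => fderiv ℝ ρ w 1 - ρ w * fderiv ℝ φ w Complex.I) z :=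
    hρx.sub (hρd.mul hφy)
  have hF2 : DifferentiableAt ℝ (fun w => fderiv ℝ ρ w Complex.I + ρ w * fderiv ℝ φ w 1) z :=
    hρy.add (hρd.mul hφx)
  have e1 : (fun w => fderiv ℝ ρ w 1 - ρ w * fderiv ℝ φ w Complex.I)
      =ᶠ[nhds z] (fun w => Real.cos (2 * φ w)) := by
    filter_upwards [hnz] with w hw
    exact heq1 w hw
  have e2 : (fun w => fderiv ℝ ρ w Complex.I + ρ w * fderiv ℝ φ w 1)
      =ᶠ[nhds z] (fun w => -Real.sin (2 * φ w)) := by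
    filter_upwards [hnz] with w hw
    exact heq2 w hw
  have d1 := e1.fderiv_eq (𝕜 := ℝ)
  have d2 := e2.fderiv_eq (𝕜 := ℝ)
  rw [fderiv_fun_sub (g := fun w => ρ w * fderiv ℝ φ w Complex.I) hρx (hρd.mul hφy), fderiv_fun_mul hρd hφy, hcos.fderiv] at d1
  rw [fderiv_fun_add (g := fun w => ρ w * fderiv ℝ φ w 1) hρy (hρd.mul hφx), fderiv_fun_mul hρd hφx, hsin.fderiv] at d2
  -- apply d1 to direction 1, d2 to direction I
  have D1 := congrFun (congrArg (fun (L : ℂ →L[ℝ] ℝ) => (L : ℂ → ℝ)) d1) 1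
  have D2 := congrFun (congrArg (fun (L : ℂ →L[ℝ] ℝ) => (L : ℂ → ℝ)) d2) Complex.I
  simp only [ContinuousLinearMap.coe_sub', ContinuousLinearMap.coe_add', Pi.sub_apply,
    Pi.add_apply, ContinuousLinearMap.coe_smul', Pi.smul_apply, ContinuousLinearMap.neg_apply,
    Pi.neg_apply, smul_eq_mul] at D1 D2
  rw [fderiv_pd ρ z hρz 1 1, fderiv_pd φ z hφz 1 Complex.I] at D1
  rw [fderiv_pd ρ z hρz Complex.I Complex.I, fderiv_pd φ z hφz Complex.I 1] at D2
  -- pointwise equations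
  have E1 : rx - r * py = Real.cos (2 * φ z) := heq1 z hz
  have E2 : ry + r * px = -Real.sin (2 * φ z) := heq2 z hz
  have hpyth : Real.sin (2 * φ z) ^ 2 + Real.cos (2 * φ z) ^ 2 = 1 :=
    Real.sin_sq_add_cos_sq (2 * φ z)
  have hlap : lap ρ z = R 1 1 + R Complex.I Complex.I := by
    unfold lap
    rw [fderiv_pd ρ z hρz 1 1, fderiv_pd ρ z hρz Complex.I Complex.I]
  have hmain : (pdx ρ z) ^ 2 + (pdy ρ z) ^ 2 + 2 * ρ z * lap ρ z =
      1 + 3 * (ρ z) ^ 2 * ((pdx φ z) ^ 2 + (pdy φ z) ^ 2) := by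
    show rx ^ 2 + ry ^ 2 + 2 * r * lap ρ z = 1 + 3 * r ^ 2 * (px ^ 2 + py ^ 2)
    rw [hlap]
    simp only [← hR, ← hP, ← hrx, ← hry, ← hpx, ← hpy, ← hr] at D1 D2
    linear_combination (2*r)*D1 + (2*r)*D2 + (2*r^2)*hsymm + hpyth +
      (rx + 3*r*py + Real.cos (2 * φ z))*E1 + (ry - 3*r*px - Real.sin (2 * φ z))*E2
  refine ⟨hmain, ?_⟩
  rw [hmain]
  have h1 : 0 ≤ 3 * (ρ z) ^ 2 * ((pdx φ z) ^ 2 + (pdy φ z) ^ 2) := by positivity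
  linarith
end

section
/- Let ω ⊆ ℂ be open and h : ω → ℂ a smooth function with ∂h/∂z̄ = |h|^{1/2} and h nonvanishing on ω. Then Δ(|h|^{3/4}) ≥ (3/4)|h|^{-1/4} on ω. -/
open Complex


/-- The Wirtinger derivative ∂f/∂z̄ = (1/2)(∂f/∂x + i ∂f/∂y). -/
noncomputable def wbar (f : ℂ → ℂ) (z : ℂ) : ℂ :=
  (1 / 2 : ℂ) * (fderiv ℝ f z 1 + Complex.I * fderiv ℝ f z Complex.I)

set_option maxHeartbeats 1000000 in
theorem stmt3 (ω : Set ℂ) (hω : IsOpen ω) (h : ℂ → ℂ)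
    (hsm : ContDiffOn ℝ (⊤ : ℕ∞) h ω) (h0 : ∀ z ∈ ω, h z ≠ 0)
    (heq : ∀ z ∈ ω, wbar h z = ((‖h z‖ ^ ((1 : ℝ) / 2) : ℝ) : ℂ)) :
    ∀ z ∈ ω,
      (3 / 4) * ‖h z‖ ^ (-(1 : ℝ) / 4) ≤ lap (fun w => ‖h w‖ ^ ((3 : ℝ) / 4)) z := by
  intro z hz
  set P : ℂ → ℝ := fun w => (h w).re with hPdef
  set Q : ℂ → ℝ := fun w => (h w).im with hQdef
  set S : ℂ → ℝ := fun w => P w * P w + Q w * Q w with hSdef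
  have hd : ∀ w ∈ ω, DifferentiableAt ℝ h w := fun w hw =>
    (hsm.contDiffAt (hω.mem_nhds hw)).differentiableAt (by simp)
  have hP : ∀ w ∈ ω, HasFDerivAt P (Complex.reCLM.comp (fderiv ℝ h w)) w := by
    intro w hw
    have := (Complex.reCLM.hasFDerivAt (x := h w)).comp w (hd w hw).hasFDerivAt
    simpa [Function.comp_def] using this
  have hQ : ∀ w ∈ ω, HasFDerivAt Q (Complex.imCLM.comp (fderiv ℝ h w)) w := by
    intro w hw
    have := (Complex.imCLM.hasFDerivAt (x := h w)).comp w (hd w hw).hasFDerivAt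
    simpa [Function.comp_def] using this
  have hS : ∀ w ∈ ω, HasFDerivAt S
      ((P w • (Complex.reCLM.comp (fderiv ℝ h w)) + P w • (Complex.reCLM.comp (fderiv ℝ h w))) +
       (Q w • (Complex.imCLM.comp (fderiv ℝ h w)) + Q w • (Complex.imCLM.comp (fderiv ℝ h w)))) w :=
    fun w hw => ((hP w hw).mul (hP w hw)).add ((hQ w hw).mul (hQ w hw))
  have hSpos : ∀ w ∈ ω, 0 < S w := by
    intro w hw
    have hh : S w = Complex.normSq (h w) := by
      simp [hSdef, hPdef, hQdef, Complex.normSq_apply]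
    rw [hh]; exact Complex.normSq_pos.mpr (h0 w hw)
  have hSval : ∀ w : ℂ, S w = ‖h w‖ ^ (2:ℕ) := by
    intro w
    rw [Complex.sq_norm, Complex.normSq_apply]
  have hpow : ∀ (w : ℂ) (x : ℝ), ‖h w‖ ^ x = S w ^ (x/2) := by
    intro w x
    rw [hSval w, ← Real.rpow_natCast ‖h w‖ 2, ← Real.rpow_mul (norm_nonneg _)]
    congr 1; ring
  have hfun : (fun w => ‖h w‖ ^ ((3:ℝ)/4)) = (fun w => S w ^ ((3:ℝ)/8)) := by
    funext w; rw [hpow w ((3:ℝ)/4)]; norm_num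
  rw [hfun, hpow z (-(1:ℝ)/4)]
  set v : ℂ → ℝ := fun w => S w ^ ((3:ℝ)/8) with hvdef
  have hv : ∀ w ∈ ω, HasFDerivAt v
      ((((3:ℝ)/8 * S w ^ ((3:ℝ)/8 - 1))) •
        ((P w • (Complex.reCLM.comp (fderiv ℝ h w)) + P w • (Complex.reCLM.comp (fderiv ℝ h w))) +
         (Q w • (Complex.imCLM.comp (fderiv ℝ h w)) + Q w • (Complex.imCLM.comp (fderiv ℝ h w))))) w :=
    fun w hw => (hS w hw).rpow_const (Or.inl (hSpos w hw).ne')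
  have hca : ContDiffAt ℝ (⊤ : ℕ∞) h z := hsm.contDiffAt (hω.mem_nhds hz)
  have hd2 : HasFDerivAt (fderiv ℝ h) (fderiv ℝ (fderiv ℝ h) z) z :=
    ((hca.fderiv_right (m := 1) (WithTop.coe_le_coe.mpr le_top)).differentiableAt one_ne_zero).hasFDerivAt
  have hA : ∀ e : ℂ, HasFDerivAt (fun w => fderiv ℝ h w e)
      ((fderiv ℝ (fderiv ℝ h) z).flip e) z := by
    intro e
    have := hd2.clm_apply (hasFDerivAt_const e z)
    simpa using this
  have hAre : ∀ e : ℂ, HasFDerivAt (fun w => (fderiv ℝ h w e).re)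
      (Complex.reCLM.comp ((fderiv ℝ (fderiv ℝ h) z).flip e)) z := by
    intro e
    have := (Complex.reCLM.hasFDerivAt (x := fderiv ℝ h z e)).comp z (hA e)
    simpa [Function.comp_def] using this
  have hAim : ∀ e : ℂ, HasFDerivAt (fun w => (fderiv ℝ h w e).im)
      (Complex.imCLM.comp ((fderiv ℝ (fderiv ℝ h) z).flip e)) z := by
    intro e
    have := (Complex.imCLM.hasFDerivAt (x := fderiv ℝ h z e)).comp z (hA e)
    simpa [Function.comp_def] using this
  have heq1 : ∀ e : ℂ, (fun w => fderiv ℝ v w e) =ᶠ[nhds z]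
      (fun w => (3:ℝ)/8 * S w ^ ((3:ℝ)/8 - 1) *
        (2*(P w * (fderiv ℝ h w e).re) + 2*(Q w * (fderiv ℝ h w e).im))) := by
    intro e
    filter_upwards [hω.mem_nhds hz] with w hw
    rw [(hv w hw).fderiv]
    simp
    ring
  have hφ : ∀ e : ℂ, HasFDerivAt (fun w => (3:ℝ)/8 * S w ^ ((3:ℝ)/8 - 1) *
        (2*(P w * (fderiv ℝ h w e).re) + 2*(Q w * (fderiv ℝ h w e).im)))
      ((((3:ℝ)/8 * S z ^ ((3:ℝ)/8 - 1))) •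
        (((2:ℝ) • (P z • (Complex.reCLM.comp ((fderiv ℝ (fderiv ℝ h) z).flip e)) +
            (fderiv ℝ h z e).re • (Complex.reCLM.comp (fderiv ℝ h z)))) +
         ((2:ℝ) • (Q z • (Complex.imCLM.comp ((fderiv ℝ (fderiv ℝ h) z).flip e)) +
            (fderiv ℝ h z e).im • (Complex.imCLM.comp (fderiv ℝ h z))))) +
       (2*(P z * (fderiv ℝ h z e).re) + 2*(Q z * (fderiv ℝ h z e).im)) •
        (((3:ℝ)/8) • ((((3:ℝ)/8 - 1) * S z ^ ((3:ℝ)/8 - 1 - 1)) •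
          ((P z • (Complex.reCLM.comp (fderiv ℝ h z)) + P z • (Complex.reCLM.comp (fderiv ℝ h z))) +
           (Q z • (Complex.imCLM.comp (fderiv ℝ h z)) + Q z • (Complex.imCLM.comp (fderiv ℝ h z))))))) z := by
    intro e
    exact ((((hS z hz).rpow_const (Or.inl (hSpos z hz).ne')).const_mul ((3:ℝ)/8)).mul
      ((((hP z hz).mul (hAre e)).const_mul (2:ℝ)).add (((hQ z hz).mul (hAim e)).const_mul (2:ℝ))))
  have hval : ∀ e : ℂ, fderiv ℝ (fun w => fderiv ℝ v w e) z e =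
      (3:ℝ)/8 * S z ^ ((3:ℝ)/8-1) *
        (2*((fderiv ℝ h z e).re*(fderiv ℝ h z e).re + (fderiv ℝ h z e).im*(fderiv ℝ h z e).im) +
         2*(P z * (fderiv ℝ (fderiv ℝ h) z e e).re + Q z * (fderiv ℝ (fderiv ℝ h) z e e).im))
      + (3:ℝ)/8 * (((3:ℝ)/8-1) * S z ^ ((3:ℝ)/8-1-1)) *
        ((2*(P z * (fderiv ℝ h z e).re + Q z * (fderiv ℝ h z e).im)) *
         (2*(P z * (fderiv ℝ h z e).re + Q z * (fderiv ℝ h z e).im))) := by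
    intro e
    rw [(heq1 e).fderiv_eq, (hφ e).fderiv]
    simp
    ring
  have hpde : ∀ w ∈ ω, ((1:ℝ)/2 * ((fderiv ℝ h w 1).re - (fderiv ℝ h w Complex.I).im)
        = S w ^ ((1:ℝ)/4)) ∧ ((1:ℝ)/2 * ((fderiv ℝ h w 1).im + (fderiv ℝ h w Complex.I).re) = 0) := by
    intro w hw
    have H := heq w hw
    rw [wbar, hpow w ((1:ℝ)/2), show ((1:ℝ)/2)/2 = (1:ℝ)/4 by norm_num] at H
    have Hre := congrArg Complex.re H
    have Him := congrArg Complex.im H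
    simp [Complex.add_re, Complex.add_im, Complex.mul_re, Complex.mul_im] at Hre Him
    rw [show ((1:ℝ)/4) = ((4:ℝ))⁻¹ by norm_num]
    constructor
    · linarith [Hre]
    · linarith [Him]
  have hr1 : (fun w => (1:ℝ)/2 * ((fderiv ℝ h w 1).re - (fderiv ℝ h w Complex.I).im))
      =ᶠ[nhds z] (fun w => S w ^ ((1:ℝ)/4)) := by
    filter_upwards [hω.mem_nhds hz] with w hw
    exact (hpde w hw).1
  have hr2 : (fun w => (1:ℝ)/2 * ((fderiv ℝ h w 1).im + (fderiv ℝ h w Complex.I).re))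
      =ᶠ[nhds z] (fun _ => (0:ℝ)) := by
    filter_upwards [hω.mem_nhds hz] with w hw
    exact (hpde w hw).2
  have hL1 : HasFDerivAt (fun w => (1:ℝ)/2 * ((fderiv ℝ h w 1).re - (fderiv ℝ h w Complex.I).im))
      (((1:ℝ)/2) • (Complex.reCLM.comp ((fderiv ℝ (fderiv ℝ h) z).flip 1) -
        Complex.imCLM.comp ((fderiv ℝ (fderiv ℝ h) z).flip Complex.I))) z :=
    ((hAre 1).sub (hAim Complex.I)).const_mul ((1:ℝ)/2)
  have hL2 : HasFDerivAt (fun w => (1:ℝ)/2 * ((fderiv ℝ h w 1).im + (fderiv ℝ h w Complex.I).re))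
      (((1:ℝ)/2) • (Complex.imCLM.comp ((fderiv ℝ (fderiv ℝ h) z).flip 1) +
        Complex.reCLM.comp ((fderiv ℝ (fderiv ℝ h) z).flip Complex.I))) z :=
    ((hAim 1).add (hAre Complex.I)).const_mul ((1:ℝ)/2)
  have hR1 : HasFDerivAt (fun w => S w ^ ((1:ℝ)/4))
      ((((1:ℝ)/4 * S z ^ ((1:ℝ)/4 - 1))) •
        ((P z • (Complex.reCLM.comp (fderiv ℝ h z)) + P z • (Complex.reCLM.comp (fderiv ℝ h z))) +
         (Q z • (Complex.imCLM.comp (fderiv ℝ h z)) + Q z • (Complex.imCLM.comp (fderiv ℝ h z))))) z :=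
    (hS z hz).rpow_const (Or.inl (hSpos z hz).ne')
  have hm : ∀ e : ℂ, (1:ℝ)/2 * ((fderiv ℝ (fderiv ℝ h) z e 1).re - (fderiv ℝ (fderiv ℝ h) z e Complex.I).im)
      = (1:ℝ)/4 * S z ^ ((1:ℝ)/4-1) * (2*(P z * (fderiv ℝ h z e).re + Q z * (fderiv ℝ h z e).im)) := by
    intro e
    have hfd := Filter.EventuallyEq.fderiv_eq (𝕜 := ℝ) hr1
    rw [hL1.fderiv, hR1.fderiv] at hfd
    have h2 := congrArg (fun (L : ℂ →L[ℝ] ℝ) => L e) hfd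
    simp only [ContinuousLinearMap.smul_apply, ContinuousLinearMap.add_apply, ContinuousLinearMap.sub_apply, ContinuousLinearMap.coe_comp', Function.comp_apply, ContinuousLinearMap.flip_apply, Complex.reCLM_apply, Complex.imCLM_apply, ContinuousLinearMap.zero_apply, smul_eq_mul] at h2
    linarith [h2]
  have hm0 : ∀ e : ℂ, (fderiv ℝ (fderiv ℝ h) z e 1).im + (fderiv ℝ (fderiv ℝ h) z e Complex.I).re
      = 0 := by
    intro e
    have hfd := Filter.EventuallyEq.fderiv_eq (𝕜 := ℝ) hr2
    rw [hL2.fderiv, show fderiv ℝ (fun _ : ℂ => (0:ℝ)) z = 0 from fderiv_const_apply (𝕜 := ℝ) 0] at hfd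
    have h2 := congrArg (fun (L : ℂ →L[ℝ] ℝ) => L e) hfd
    simp only [ContinuousLinearMap.smul_apply, ContinuousLinearMap.add_apply, ContinuousLinearMap.sub_apply, ContinuousLinearMap.coe_comp', Function.comp_apply, ContinuousLinearMap.flip_apply, Complex.reCLM_apply, Complex.imCLM_apply, ContinuousLinearMap.zero_apply, smul_eq_mul] at h2
    linarith [h2]
  have hcl : fderiv ℝ (fderiv ℝ h) z 1 Complex.I = fderiv ℝ (fderiv ℝ h) z Complex.I 1 :=
    (hca.isSymmSndFDerivAt (by rw [minSmoothness_of_isRCLikeNormedField]; exact WithTop.coe_le_coe.mpr le_top)) 1 Complex.I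
  have hszpos := hSpos z hz
  set t := S z ^ ((1:ℝ)/8) with htdef
  have ht : 0 < t := Real.rpow_pos_of_pos hszpos _
  have epow : ∀ n : ℕ, S z ^ ((n:ℝ)/8) = t^n := by
    intro n
    rw [htdef, ← Real.rpow_natCast (S z ^ ((1:ℝ)/8)) n, ← Real.rpow_mul hszpos.le]
    congr 1; ring
  have e1 : S z ^ ((3:ℝ)/8 - 1) = (t⁻¹)^5 := by
    rw [show (3:ℝ)/8 - 1 = -(((5:ℕ):ℝ)/8) by norm_num, Real.rpow_neg hszpos.le, epow 5, inv_pow]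
  have e2 : S z ^ ((3:ℝ)/8 - 1 - 1) = (t⁻¹)^13 := by
    rw [show (3:ℝ)/8 - 1 - 1 = -(((13:ℕ):ℝ)/8) by norm_num, Real.rpow_neg hszpos.le, epow 13, inv_pow]
  have e3 : S z ^ ((1:ℝ)/4 - 1) = (t⁻¹)^6 := by
    rw [show (1:ℝ)/4 - 1 = -(((6:ℕ):ℝ)/8) by norm_num, Real.rpow_neg hszpos.le, epow 6, inv_pow]
  have e4 : S z ^ ((1:ℝ)/4) = t^2 := by
    rw [show (1:ℝ)/4 = (((2:ℕ):ℝ)/8) by norm_num, epow 2]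
  have e5 : S z ^ (-(1:ℝ)/4/2) = t⁻¹ := by
    rw [show -(1:ℝ)/4/2 = -(((1:ℕ):ℝ)/8) by norm_num, Real.rpow_neg hszpos.le, epow 1, pow_one]
  have hc : P z * P z + Q z * Q z = t^8 := by
    have h8 := epow 8
    rw [show (((8:ℕ)):ℝ)/8 = (1:ℝ) by norm_num, Real.rpow_one] at h8
    rw [← h8]
  have r1 : t * t⁻¹ = 1 := mul_inv_cancel₀ ht.ne'
  have l1 := (hpde z hz).1
  rw [e4] at l1
  have l2 := (hpde z hz).2
  have m1 := hm 1
  have m2 := hm Complex.I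
  rw [e3] at m1 m2
  have m3 := hm0 1
  have m4 := hm0 Complex.I
  have hcl1 := congrArg Complex.re hcl
  have hcl2 := congrArg Complex.im hcl
  unfold lap
  rw [hval 1, hval Complex.I, e1, e2, e5]
  have hu0 : (0:ℝ) ≤ t⁻¹ := (inv_pos.mpr ht).le
  set p := P z with hp
  set q := Q z with hq
  set a1 := (fderiv ℝ h z 1).re with ha1
  set a2 := (fderiv ℝ h z 1).im with ha2
  set b1 := (fderiv ℝ h z Complex.I).re with hb1
  set b2 := (fderiv ℝ h z Complex.I).im with hb2
  set X1 := (fderiv ℝ (fderiv ℝ h) z 1 1).re with hX1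
  set X2 := (fderiv ℝ (fderiv ℝ h) z 1 1).im with hX2
  set Z1 := (fderiv ℝ (fderiv ℝ h) z 1 Complex.I).re with hZ1
  set Z2 := (fderiv ℝ (fderiv ℝ h) z 1 Complex.I).im with hZ2
  set W1 := (fderiv ℝ (fderiv ℝ h) z Complex.I 1).re with hW1
  set W2 := (fderiv ℝ (fderiv ℝ h) z Complex.I 1).im with hW2
  set Y1 := (fderiv ℝ (fderiv ℝ h) z Complex.I Complex.I).re with hY1
  set Y2 := (fderiv ℝ (fderiv ℝ h) z Complex.I Complex.I).im with hY2
  set u := t⁻¹ with hu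
  have key : (3:ℝ)/8 * u^5 * (2*(a1*a1 + a2*a2) + 2*(p*X1 + q*X2)) +
      (3:ℝ)/8 * (((3:ℝ)/8-1) * u^13) * ((2*(p*a1 + q*a2)) * (2*(p*a1 + q*a2))) +
      ((3:ℝ)/8 * u^5 * (2*(b1*b1 + b2*b2) + 2*(p*Y1 + q*Y2)) +
      (3:ℝ)/8 * (((3:ℝ)/8-1) * u^13) * ((2*(p*b1 + q*b2)) * (2*(p*b1 + q*b2)))) -
      3/4 * u =
      (9:ℝ)/16 * u^5 * ((u^6*(t^6*(a1 - t^2) - (p*p - q*q)))^2 + (u^6*(t^6*a2 - 2*(p*q)))^2) := by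
    linear_combination (((3/2)*p*u^5))*m1 + (((-3/2)*q*u^5))*m2 + (((3/4)*q*u^5))*m3 + (((3/4)*p*u^5))*m4 + (((-3/4)*q*u^5))*hcl1 + (((3/4)*p*u^5))*hcl2 + ((3*t^2*u^5 + (-3/2)*b2*u^5 + (-3/2)*a1*u^5 + (3/2)*q^2*u^11 + (-15/4)*q^2*t^2*u^13 + (15/8)*q^2*b2*u^13 + (15/8)*q^2*a1*u^13 + (15/4)*p*q*b1*u^13))*l1 + (((3/2)*b1*u^5 + (-3/2)*a2*u^5 + (-3/2)*p*q*u^11 + (15/2)*p*q*t^2*u^13 + (-15/4)*p*q*a1*u^13 + (-15/8)*p^2*b1*u^13 + (15/8)*p^2*a2*u^13))*l2 + (((3/4)*u + (3/4)*t*u^2 + (3/4)*t^2*u^3 + (3/4)*t^3*u^4 + (-9/4)*t^4*u^5 + (-9/4)*t^5*u^6 + (-9/4)*t^6*u^7 + (-9/4)*t^7*u^8 + (-9/8)*t^8*u^9 + (-9/8)*t^9*u^10 + (-9/8)*t^10*u^11 + (-9/8)*t^11*u^12 + (-9/8)*t^12*u^13 + (-9/8)*t^13*u^14 + (-9/8)*t^14*u^15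 + (-9/8)*t^15*u^16 + (-3/2)*a2^2*u^5 + (-3/2)*a2^2*t*u^6 + (-3/2)*a2^2*t^2*u^7 + (-3/2)*a2^2*t^3*u^8 + (-3/2)*a2^2*t^4*u^9 + (-3/2)*a2^2*t^5*u^10 + (-3/2)*a2^2*t^6*u^11 + (-3/2)*a2^2*t^7*u^12 + (-9/16)*a2^2*t^8*u^13 + (-9/16)*a2^2*t^9*u^14 + (-9/16)*a2^2*t^10*u^15 + (-9/16)*a2^2*t^11*u^16 + 3*a1*t^2*u^5 + 3*a1*t^3*u^6 + 3*a1*t^4*u^7 + 3*a1*t^5*u^8 + 3*a1*t^6*u^9 + 3*a1*t^7*u^10 + (9/8)*a1*t^8*u^11 + (9/8)*a1*t^9*u^12 + (9/8)*a1*t^10*u^13 + (9/8)*a1*t^11*u^14 + (9/8)*a1*t^12*u^15 + (9/8)*a1*t^13*u^16 + (-3/2)*a1^2*u^5 + (-3/2)*a1^2*t*u^6 + (-3/2)*a1^2*t^2*u^7 + (-3/2)*a1^2*t^3*u^8 + (-3/2)*a1^2*t^4*u^9 + (-3/2)*a1^2*t^5*u^10 + (-3/2)*a1^2*t^6*u^11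 + (-3/2)*a1^2*t^7*u^12 + (-9/16)*a1^2*t^8*u^13 + (-9/16)*a1^2*t^9*u^14 + (-9/16)*a1^2*t^10*u^15 + (-9/16)*a1^2*t^11*u^16 + (-9/8)*q^2*u^9 + (-9/8)*q^2*t*u^10 + (-21/8)*q^2*t^2*u^11 + (-21/8)*q^2*t^3*u^12 + (9/8)*q^2*t^4*u^13 + (9/8)*q^2*t^5*u^14 + (9/8)*q^2*t^6*u^15 + (9/8)*q^2*t^7*u^16 + (21/8)*q^2*a1*u^11 + (21/8)*q^2*a1*t*u^12 + (-9/8)*q^2*a1*t^2*u^13 + (-9/8)*q^2*a1*t^3*u^14 + (-9/8)*q^2*a1*t^4*u^15 + (-9/8)*q^2*a1*t^5*u^16 + (-3/2)*p*q*a2*u^11 + (-3/2)*p*q*a2*t*u^12 + (9/4)*p*q*a2*t^2*u^13 + (9/4)*p*q*a2*t^3*u^14 + (9/4)*p*q*a2*t^4*u^15 + (9/4)*p*q*a2*t^5*u^16 + (-9/8)*p^2*u^9 + (-9/8)*p^2*t*u^10 + (-9/8)*p^2*t^2*u^11 + (-9/8)*p^2*t^3*u^12 + (-9/8)*p^2*t^4*u^13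 + (-9/8)*p^2*t^5*u^14 + (-9/8)*p^2*t^6*u^15 + (-9/8)*p^2*t^7*u^16 + (9/8)*p^2*a1*u^11 + (9/8)*p^2*a1*t*u^12 + (9/8)*p^2*a1*t^2*u^13 + (9/8)*p^2*a1*t^3*u^14 + (9/8)*p^2*a1*t^4*u^15 + (9/8)*p^2*a1*t^5*u^16))*r1 + (((-9/8)*u^9 + (-9/16)*t^8*u^17 + (-15/16)*a2^2*u^13 + (15/8)*a1*u^11 + (-15/16)*a1^2*u^13 + (-9/16)*q^2*u^17 + (-9/16)*p^2*u^17))*hc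
  have hnn : (0:ℝ) ≤ (9:ℝ)/16 * u^5 * ((u^6*(t^6*(a1 - t^2) - (p*p - q*q)))^2 + (u^6*(t^6*a2 - 2*(p*q)))^2) := by
    have h5 : (0:ℝ) ≤ u^5 := pow_nonneg hu0 5
    have hsq : (0:ℝ) ≤ (u^6*(t^6*(a1 - t^2) - (p*p - q*q)))^2 + (u^6*(t^6*a2 - 2*(p*q)))^2 := by positivity
    calc (0:ℝ) ≤ ((9:ℝ)/16 * u^5) * ((u^6*(t^6*(a1 - t^2) - (p*p - q*q)))^2 + (u^6*(t^6*a2 - 2*(p*q)))^2) :=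
          mul_nonneg (by positivity) hsq
      _ = (9:ℝ)/16 * u^5 * ((u^6*(t^6*(a1 - t^2) - (p*p - q*q)))^2 + (u^6*(t^6*a2 - 2*(p*q)))^2) := by ring
  rw [← sub_nonneg, key]
  exact hnn
end

section
/- If u is a nonnegative continuous function on the closed unit disc, subharmonic on {u > 0}, with Δu ≥ 1 on {u > 0} and u(0) > 0, then the function v(x,y) = u(x,y) − (1/4)(x² + y²) is subharmonic on the open set ω = {u > 0}, and v attains a positive value at 0 while being ≤ sup u − 1/4 ... ≤ 0 on ∂ω if sup u ≤ 1/4; hence sup u > 1/4 by the maximum principle. -/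
/-!
In dimension `n`, `Δ‖x‖² = 2n`. If `u ≤ r² / (2n)` on the closed ball of radius `r`, take `c`
slightly below `1 / (2n)`: the maximum of `w = u - c‖x‖²` over the closed ball is at least
`w 0 = u 0 > 0`, so it is attained where `u > 0`, and not on the sphere, where
`w ≤ r² / (2n) - c r² < u 0`. But there `Δw = Δu - 2nc ≥ 1 - 2nc > 0`, which is impossible at an
interior maximum.
-/

open Metric

open Filter Topology Laplacian InnerProductSpace Module

section SecondDerivative

variable {E : Type*} [NormedAddCommGroup E] [NormedSpace ℝ E] {f : E → ℝ} {z : E}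

theorem IsLocalMax.deriv_deriv_nonpos {g : ℝ → ℝ} {x : ℝ} (h : IsLocalMax g x)
    (hc : ContinuousAt g x) : deriv (deriv g) x ≤ 0 := by
  by_contra! hpos
  -- the second-derivative test makes `x` also a local minimum, so `g` is locally constant
  have hconst : g =ᶠ[𝓝 x] fun _ => g x :=
    (h.and (isLocalMin_of_deriv_deriv_pos hpos h.deriv_eq_zero hc)).mono
      fun t ht => le_antisymm ht.1 ht.2
  have hderiv : deriv g =ᶠ[𝓝 x] fun _ => 0 :=
    hconst.eventually_nhds.mono fun t ht => by rw [EventuallyEq.deriv_eq ht, deriv_const]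
  rw [hderiv.deriv_eq, deriv_const] at hpos
  exact hpos.false

theorem ContDiffAt.differentiableAt_fderiv (hf : ContDiffAt ℝ 2 f z) :
    DifferentiableAt ℝ (fderiv ℝ f) z :=
  (hf.fderiv_right (m := 1) (by norm_num)).differentiableAt one_ne_zero

theorem IsLocalMax.fderiv_fderiv_apply_self_nonpos (h : IsLocalMax f z)
    (hf : ContDiffAt ℝ 2 f z) (e : E) : fderiv ℝ (fderiv ℝ f) z e e ≤ 0 := by
  set φ : ℝ → E := fun t => z + t • e
  have hφ (t : ℝ) : HasDerivAt φ e t :=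
    one_smul ℝ e ▸ ((hasDerivAt_id' t).smul_const e).const_add z
  have hφ0 : φ 0 = z := by simp [φ]
  have hφz : Tendsto φ (𝓝 0) (𝓝 z) := hφ0 ▸ (hφ 0).continuousAt.tendsto
  have hderiv : deriv (f ∘ φ) =ᶠ[𝓝 0] fun t => fderiv ℝ f (φ t) e := by
    filter_upwards [hφz.eventually (hf.eventually (by simp))] with t ht
    exact ((ht.differentiableAt two_ne_zero).hasFDerivAt.comp_hasDerivAt t (hφ t)).deriv
  have hderiv2 : HasDerivAt (fun t => fderiv ℝ f (φ t) e) (fderiv ℝ (fderiv ℝ f) z e e) 0 :=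
    hφ0 ▸ ((hφ0 ▸ hf.differentiableAt_fderiv).hasFDerivAt.comp_hasDerivAt 0 (hφ 0)).clm_apply
      (hasDerivAt_const 0 e) |>.congr_deriv (by simp)
  have hmax : IsLocalMax (f ∘ φ) 0 := (hφ0 ▸ h).comp_continuous (hφ 0).continuousAt
  have hcont : ContinuousAt (f ∘ φ) 0 :=
    (hφ0 ▸ hf.continuousAt : ContinuousAt f (φ 0)).comp (hφ 0).continuousAt
  simpa [hderiv.deriv_eq, hderiv2.deriv] using hmax.deriv_deriv_nonpos hcont

end SecondDerivative

section Laplacian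

variable {E : Type*} [NormedAddCommGroup E] [InnerProductSpace ℝ E] [FiniteDimensional ℝ E]
  {f : E → ℝ} {z : E}

theorem IsLocalMax.laplacian_nonpos (h : IsLocalMax f z) (hf : ContDiffAt ℝ 2 f z) :
    Δ f z ≤ 0 := by
  rw [laplacian_eq_iteratedFDeriv_stdOrthonormalBasis]
  exact Finset.sum_nonpos fun i _ => by
    simpa [iteratedFDeriv_two_apply] using h.fderiv_fderiv_apply_self_nonpos hf _

theorem laplacian_norm_sq : Δ (fun x : E => ‖x‖ ^ 2) z = 2 * finrank ℝ E := by
  have hfderiv : fderiv ℝ (fun x : E => ‖x‖ ^ 2) = ⇑(2 • innerSL ℝ : E →L[ℝ] E →L[ℝ] ℝ) :=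
    funext fun x => (hasStrictFDerivAt_norm_sq x).hasFDerivAt.fderiv
  have hinner (v : E) : innerSL ℝ v v = ‖v‖ ^ 2 := real_inner_self_eq_norm_sq v
  rw [laplacian_eq_iteratedFDeriv_stdOrthonormalBasis]
  simp only [iteratedFDeriv_two_apply, hfderiv, ContinuousLinearMap.fderiv, smul_apply,
    Matrix.cons_val_zero, Matrix.cons_val_one]
  simp [hinner, mul_comm]

theorem laplacian_sub_mul_norm_sq (hf : ContDiffAt ℝ 2 f z) (c : ℝ) :
    Δ (fun x => f x - c * ‖x‖ ^ 2) z = Δ f z - c * (2 * finrank ℝ E) := by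
  have hq : ContDiffAt ℝ 2 (c • fun x : E => ‖x‖ ^ 2) z :=
    (contDiff_norm_sq ℝ).contDiffAt.const_smul c
  rw [show (fun x => f x - c * ‖x‖ ^ 2) = f - c • fun x : E => ‖x‖ ^ 2 from rfl,
    hf.laplacian_sub hq, laplacian_smul c (contDiff_norm_sq ℝ).contDiffAt, laplacian_norm_sq,
    smul_eq_mul]

theorem exists_sq_div_lt_of_one_le_laplacian [Nontrivial E] {u : E → ℝ} {r : ℝ} (hr : 0 < r)
    (hcont : ContinuousOn u (closedBall 0 r))
    (hC2 : ∀ z ∈ ball 0 r, 0 < u z → ContDiffAt ℝ 2 u z)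
    (hΔ : ∀ z ∈ ball 0 r, 0 < u z → 1 ≤ Δ u z) (h0 : 0 < u 0) :
    ∃ z ∈ closedBall 0 r, r ^ 2 / (2 * finrank ℝ E) < u z := by
  by_contra! hle
  set k : ℝ := 2 * finrank ℝ E
  have hk : 0 < k := by have := finrank_pos (R := ℝ) (M := E); positivity
  obtain ⟨c, hc, hck⟩ := exists_between
    (max_lt (one_div_pos.2 hk) (sub_lt_self (1 / k) (div_pos h0 (pow_pos hr 2))))
  obtain ⟨hc0, hcu⟩ := max_lt_iff.1 hc
  set w : E → ℝ := fun x => u x - c * ‖x‖ ^ 2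
  obtain ⟨z₀, hz₀, hmax⟩ := (isCompact_closedBall (0 : E) r).exists_isMaxOn (f := w)
    ⟨0, mem_closedBall_self hr.le⟩ (hcont.sub (by fun_prop))
  have hw₀ : u 0 ≤ w z₀ := by simpa [w] using hmax (mem_closedBall_self hr.le)
  have hpos : 0 < u z₀ := by
    have : 0 ≤ c * ‖z₀‖ ^ 2 := by positivity
    linarith
  have hball : z₀ ∈ ball 0 r := by
    refine lt_of_le_of_ne (mem_closedBall.1 hz₀) fun hsphere => ?_
    rw [dist_zero_right] at hsphere
    have hboundary : w z₀ = u z₀ - c * r ^ 2 := by simp [w, hsphere]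
    have : r ^ 2 / k - c * r ^ 2 < u 0 := by
      have := mul_lt_mul_of_pos_right hcu (pow_pos hr 2)
      field_simp at this ⊢
      linarith
    linarith [hle z₀ hz₀]
  have hmax_nonpos := (hmax.isLocalMax (closedBall_mem_nhds_of_mem hball)).laplacian_nonpos
    ((hC2 z₀ hball hpos).sub (contDiffAt_const.mul (contDiff_norm_sq ℝ).contDiffAt))
  rw [laplacian_sub_mul_norm_sq (hC2 z₀ hball hpos)] at hmax_nonpos
  have : c * k < 1 := (lt_div_iff₀ hk).1 hck
  linarith [hΔ z₀ hball hpos]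

end Laplacian

theorem ContDiffAt.lap_eq_laplacian {f : ℂ → ℝ} {z : ℂ} (hf : ContDiffAt ℝ 2 f z) :
    lap f z = Δ f z := by
  simp [lap, laplacian_eq_iteratedFDeriv_complexPlane, iteratedFDeriv_two_apply,
    fderiv_clm_apply hf.differentiableAt_fderiv (differentiableAt_const _)]

theorem ContDiffAt.lap_sub_mul_re_sq_add_im_sq {f : ℂ → ℝ} {z : ℂ} (hf : ContDiffAt ℝ 2 f z)
    (c : ℝ) : lap (fun w => f w - c * (w.re ^ 2 + w.im ^ 2)) z = lap f z - 4 * c := by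
  have hnorm : (fun w : ℂ => f w - c * (w.re ^ 2 + w.im ^ 2)) = fun w => f w - c * ‖w‖ ^ 2 := by
    ext w; rw [Complex.sq_norm, Complex.normSq_apply, sq, sq]
  rw [hnorm, ContDiffAt.lap_eq_laplacian, laplacian_sub_mul_norm_sq hf, hf.lap_eq_laplacian,
    Complex.finrank_real_complex]
  · ring
  · exact hf.sub (contDiffAt_const.mul (contDiff_norm_sq ℝ).contDiffAt)

theorem stmt5_general (u : ℂ → ℝ)
    (hcont : ContinuousOn u (closedBall (0 : ℂ) 1))
    (hC2 : ContDiffOn ℝ 2 u {z ∈ ball (0 : ℂ) 1 | 0 < u z})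
    (hlap : ∀ z ∈ ball (0 : ℂ) 1, 0 < u z → 1 ≤ lap u z)
    (h0 : 0 < u 0) :
    -- v = u - (1/4)(x² + y²) is subharmonic (nonnegative Laplacian) on ω = {u > 0},
    (∀ z ∈ {z ∈ ball (0 : ℂ) 1 | 0 < u z},
      0 ≤ lap (fun w => u w - (1 / 4) * (w.re ^ 2 + w.im ^ 2)) z) ∧
    -- v is positive at 0,
    0 < u 0 - (1 / 4) * ((0 : ℂ).re ^ 2 + (0 : ℂ).im ^ 2) ∧
    -- and hence, by the maximum principle, sup u > 1/4:
    ∃ z ∈ closedBall (0 : ℂ) 1, 1 / 4 < u z := by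
  have hω : IsOpen {z ∈ ball (0 : ℂ) 1 | 0 < u z} :=
    (hcont.mono ball_subset_closedBall).isOpen_inter_preimage isOpen_ball isOpen_Ioi
  have hC2At (z) (hz : z ∈ ball (0 : ℂ) 1) (hu : 0 < u z) : ContDiffAt ℝ 2 u z :=
    hC2.contDiffAt (hω.mem_nhds ⟨hz, hu⟩)
  refine ⟨fun z ⟨hz, hu⟩ => ?_, by simpa using h0, ?_⟩
  · rw [(hC2At z hz hu).lap_sub_mul_re_sq_add_im_sq]
    linarith [hlap z hz hu]
  · have := exists_sq_div_lt_of_one_le_laplacian one_pos hcont hC2At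
      (fun z hz hu => (hC2At z hz hu).lap_eq_laplacian ▸ hlap z hz hu) h0
    convert this using 4
    norm_num [Complex.finrank_real_complex]

theorem stmt5 (u : ℂ → ℝ)
    (hcont : ContinuousOn u (closedBall (0 : ℂ) 1))
    (hnonneg : ∀ z ∈ closedBall (0 : ℂ) 1, 0 ≤ u z)
    (hC2 : ContDiffOn ℝ 2 u {z ∈ ball (0 : ℂ) 1 | 0 < u z})
    (hlap : ∀ z ∈ ball (0 : ℂ) 1, 0 < u z → 1 ≤ lap u z)
    (h0 : 0 < u 0) :
    -- v = u - (1/4)(x² + y²) is subharmonic (nonnegative Laplacian) on ω = {u > 0},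
    (∀ z ∈ {z ∈ ball (0 : ℂ) 1 | 0 < u z},
      0 ≤ lap (fun w => u w - (1 / 4) * (w.re ^ 2 + w.im ^ 2)) z) ∧
    -- v is positive at 0,
    0 < u 0 - (1 / 4) * ((0 : ℂ).re ^ 2 + (0 : ℂ).im ^ 2) ∧
    -- and hence, by the maximum principle, sup u > 1/4:
    ∃ z ∈ closedBall (0 : ℂ) 1, 1 / 4 < u z :=
  stmt5_general u hcont hC2 hlap h0
end

section
/- The function f : ℂ → ℂ defined by f(z) = 0 if Re z ≤ 0 and f(z) = (Re z)² if Re z > 0 is continuously differentiable and satisfies ∂f/∂z̄ = |f|^{1/2} on the set where f ≠ 0 (indeed everywhere, up to the factor conventions: with f depending only on x, ∂f/∂z̄ = (1/2) f'(x), and (1/2)(x²)' = x = |x²|^{1/2} for x > 0). Hence the equation ∂f/∂z̄ = |f|^{1/2} admits nonzero solutions vanishing on an open set, exhibiting non-uniqueness. -/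
lemma hasDerivAt_max_zero_sq_of_ne {x : ℝ} (hx : x ≠ 0) :
    HasDerivAt (fun y : ℝ => max y 0 ^ 2) (2 * max x 0) x := by
  rcases hx.lt_or_gt with hneg | hpos
  · have hzero : (fun y : ℝ => max y 0 ^ 2) =ᶠ[nhds x] fun _ => 0 := by
      filter_upwards [Iio_mem_nhds hneg] with y hy
      simp [max_eq_right (le_of_lt (Set.mem_Iio.mp hy))]
    simpa [max_eq_right hneg.le] using (hasDerivAt_const x (0 : ℝ)).congr_of_eventuallyEq hzero
  · have hsq : (fun y : ℝ => max y 0 ^ 2) =ᶠ[nhds x] fun y => y ^ 2 := by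
      filter_upwards [Ioi_mem_nhds hpos] with y hy
      simp [max_eq_left (le_of_lt (Set.mem_Ioi.mp hy))]
    simpa [max_eq_left hpos.le] using (hasDerivAt_pow 2 x).congr_of_eventuallyEq hsq

lemma hasDerivAt_max_zero_sq (x : ℝ) :
    HasDerivAt (fun y : ℝ => max y 0 ^ 2) (2 * max x 0) x :=
  hasDerivAt_of_hasDerivAt_of_ne' (fun _ hy => hasDerivAt_max_zero_sq_of_ne hy)
    (by fun_prop) (by fun_prop) x

lemma contDiff_max_zero_sq : ContDiff ℝ 1 (fun y : ℝ => max y 0 ^ 2) := by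
  have hderiv : deriv (fun y : ℝ => max y 0 ^ 2) = fun x => 2 * max x 0 :=
    funext fun x => (hasDerivAt_max_zero_sq x).deriv
  rw [contDiff_one_iff_deriv, hderiv]
  exact ⟨fun x => (hasDerivAt_max_zero_sq x).differentiableAt, by fun_prop⟩

lemma contDiff_ofReal_comp_re {n : WithTop ℕ∞} {g : ℝ → ℝ} (hg : ContDiff ℝ n g) :
    ContDiff ℝ n (fun z : ℂ => (g z.re : ℂ)) :=
  Complex.ofRealCLM.contDiff.comp (hg.comp Complex.reCLM.contDiff)

lemma wbar_ofReal_comp_re {g : ℝ → ℝ} {g' : ℝ} {z : ℂ} (hg : HasDerivAt g g' z.re) :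
    wbar (fun w : ℂ => (g w.re : ℂ)) z = g' / 2 := by
  have hfderiv : HasFDerivAt (fun w : ℂ => (g w.re : ℂ))
      (Complex.ofRealCLM.comp (g' • Complex.reCLM)) z :=
    Complex.ofRealCLM.hasFDerivAt.comp z (hg.comp_hasFDerivAt z Complex.reCLM.hasFDerivAt)
  simp [wbar, hfderiv.fderiv, div_eq_inv_mul]

theorem stmt9 (f : ℂ → ℂ)
    (hf : ∀ z : ℂ, f z = if 0 < z.re then ((z.re ^ 2 : ℝ) : ℂ) else 0) :
    ContDiff ℝ 1 f ∧
    (∀ z : ℂ, z.re ≤ 0 → f z = 0) ∧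
    (∃ z : ℂ, f z ≠ 0) ∧
    (∀ z : ℂ, wbar f z = ((‖f z‖ ^ ((1 : ℝ) / 2) : ℝ) : ℂ)) := by
  have hf_eq : f = fun z : ℂ => ((max z.re 0 ^ 2 : ℝ) : ℂ) := by
    funext z
    rw [hf z]
    rcases lt_or_ge 0 z.re with h | h
    · simp [h, max_eq_left h.le]
    · simp [not_lt.2 h, max_eq_right h]
  refine ⟨hf_eq ▸ contDiff_ofReal_comp_re contDiff_max_zero_sq, fun z hz => ?_, ⟨1, ?_⟩,
    fun z => ?_⟩
  · simp [hf_eq, max_eq_right hz]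
  · simp [hf_eq]
  · have hmax : 0 ≤ max z.re 0 := le_max_right _ _
    rw [hf_eq, wbar_ofReal_comp_re (hasDerivAt_max_zero_sq z.re), Complex.norm_real,
      Real.norm_of_nonneg (by positivity), ← Real.sqrt_eq_rpow, Real.sqrt_sq hmax]
    push_cast
    ring
end

section
/- There exists a constant A < 2 such that: for any r with A < r ≤ 2 and any holomorphic function Z₁ : 𝔻_r → 𝔻₂ with Z₁(0) = 0 and Z₁'(0) = 1, there exists a holomorphic map φ : 𝔻 → 𝔻_r with φ(0) = 0, φ'(0) ≠ 0, and Z₁(φ(z)) = z for all z ∈ 𝔻. (That is, Z₁ admits a holomorphic right inverse defined on the whole unit disc.) -/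
open Metric Set NNReal

/-!
Write `Z₁ z = z q z`. By the Schwarz lemma `q` maps the disc of radius `r` into the closed disc of
radius `2 / r ≤ ρ`, with `ρ` slightly larger than `1`, while `q 0 = 1` lies near its boundary.
Composing `q` with a Möbius self-map of that disc sending `1` to `0` and applying the Schwarz lemma
again shows that `q` stays close to `1`, so `‖Z₁ z - z‖ ≤ 1/16` for `‖z‖ ≤ 7/4`. Cauchy's estimate
gives `‖Z₁' - 1‖ ≤ 1/4` on the disc of radius `3/2`; there `Z₁` is a small perturbation of the
identity, and the quantitative inverse function theorem inverts it on the disc of radius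
`(3/4) (3/2) > 1`.
-/

theorem mul_norm_sub_one_le_norm_sq_sub {ρ : ℝ} (hρ : 1 ≤ ρ) {w : ℂ} (hw : ‖w‖ ≤ ρ) :
    ρ * ‖w - 1‖ ≤ ‖((ρ ^ 2 : ℝ) : ℂ) - w‖ := by
  have key : ‖((ρ ^ 2 : ℝ) : ℂ) - w‖ ^ 2 - (ρ * ‖w - 1‖) ^ 2 = (ρ ^ 2 - 1) * (ρ ^ 2 - ‖w‖ ^ 2) := by
    simp only [mul_pow, Complex.sq_norm, Complex.normSq_apply, Complex.sub_re, Complex.sub_im,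
      Complex.one_re, Complex.one_im, Complex.ofReal_re, Complex.ofReal_im]
    ring
  have : 0 ≤ (ρ ^ 2 - 1) * (ρ ^ 2 - ‖w‖ ^ 2) := by
    have := norm_nonneg w
    apply mul_nonneg <;> nlinarith
  exact (pow_le_pow_iff_left₀ (by positivity) (norm_nonneg _) two_ne_zero).mp (by linarith)

theorem norm_sub_one_le_of_mapsTo_closedBall {q : ℂ → ℂ} {R ρ : ℝ} (hρ : 1 < ρ)
    (hq : DifferentiableOn ℂ q (ball 0 R)) (hmaps : MapsTo q (ball 0 R) (closedBall 0 ρ))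
    (hq0 : q 0 = 1) {z : ℂ} (hz : z ∈ ball 0 R) :
    ‖q z - 1‖ ≤ ‖z‖ * (ρ ^ 2 - 1) / (ρ * R - ‖z‖) := by
  set P : ℂ := ((ρ ^ 2 : ℝ) : ℂ)
  have hP : ‖P‖ = ρ ^ 2 := by simp [P]
  have hP1 : ‖P - 1‖ = ρ ^ 2 - 1 := by
    rw [show P - 1 = ((ρ ^ 2 - 1 : ℝ) : ℂ) by push_cast [P]; ring, Complex.norm_real,
      Real.norm_of_nonneg (by nlinarith)]
  have hqρ : ∀ w ∈ ball (0 : ℂ) R, ‖q w‖ ≤ ρ := fun w hw => mem_closedBall_zero_iff.mp (hmaps hw)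
  have hden : ∀ w ∈ ball (0 : ℂ) R, P - q w ≠ 0 := fun w hw h => by
    have := hqρ w hw
    rw [← sub_eq_zero.mp h, hP] at this
    nlinarith
  -- the Möbius map `w ↦ ρ² (w - 1) / (ρ² - w)` sends `closedBall 0 ρ` to itself and `1` to `0`
  set F : ℂ → ℂ := fun w => P * (q w - 1) / (P - q w)
  have hF : DifferentiableOn ℂ F (ball 0 R) :=
    ((hq.sub_const 1).const_mul P).div (hq.const_sub P) hden
  have hF0 : F 0 = 0 := by simp [F, hq0]
  have hFmaps : MapsTo F (ball 0 R) (closedBall (F 0) ρ) := fun w hw => by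
    rw [hF0, mem_closedBall_zero_iff, norm_div, norm_mul, hP,
      div_le_iff₀ (norm_pos_iff.mpr (hden w hw)), pow_two, mul_assoc]
    exact mul_le_mul_of_nonneg_left (mul_norm_sub_one_le_norm_sq_sub hρ.le (hqρ w hw)) (by linarith)
  have hR : 0 < R := pos_of_mem_ball hz
  have hschwarz : ‖F z‖ ≤ ρ / R * ‖z‖ := by
    simpa [hF0] using Complex.dist_le_div_mul_dist_of_mapsTo_ball hF hFmaps hz
  have hFz : ρ ^ 2 * ‖q z - 1‖ = ‖F z‖ * ‖P - q z‖ := by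
    rw [← hP, ← norm_mul, ← norm_mul, div_mul_cancel₀ _ (hden z hz)]
  have htri : ‖P - q z‖ ≤ ρ ^ 2 - 1 + ‖q z - 1‖ := by
    calc ‖P - q z‖ = ‖(P - 1) - (q z - 1)‖ := by ring_nf
      _ ≤ ‖P - 1‖ + ‖q z - 1‖ := norm_sub_le _ _
      _ = ρ ^ 2 - 1 + ‖q z - 1‖ := by rw [hP1]
  have hzR : ‖z‖ < R := mem_ball_zero_iff.mp hz
  have hmain : ρ * R * ‖q z - 1‖ ≤ ‖z‖ * (ρ ^ 2 - 1 + ‖q z - 1‖) := by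
    have h := hFz.le.trans (mul_le_mul hschwarz htri (norm_nonneg _) (by positivity))
    rw [div_mul_eq_mul_div, div_mul_eq_mul_div, le_div_iff₀ hR] at h
    nlinarith
  rw [le_div_iff₀ (by nlinarith)]
  linarith

theorem norm_sub_self_le_of_mapsTo_closedBall {f : ℂ → ℂ} {R ρ : ℝ} (hρ : 1 < ρ)
    (hf : DifferentiableOn ℂ f (ball 0 R)) (hmaps : MapsTo f (ball 0 R) (closedBall 0 (ρ * R)))
    (hf0 : f 0 = 0) (hf'0 : deriv f 0 = 1) {z : ℂ} (hz : z ∈ ball 0 R) :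
    ‖f z - z‖ ≤ ‖z‖ ^ 2 * (ρ ^ 2 - 1) / (ρ * R - ‖z‖) := by
  have hR : 0 < R := pos_of_mem_ball hz
  have hq : DifferentiableOn ℂ (dslope f 0) (ball 0 R) :=
    (Complex.differentiableOn_dslope (ball_mem_nhds 0 hR)).mpr hf
  have hqmaps : MapsTo (dslope f 0) (ball 0 R) (closedBall 0 ρ) := fun w hw => by
    have := Complex.norm_dslope_le_div_of_mapsTo_ball hf (by rwa [hf0]) hw
    rwa [mul_div_cancel_right₀ ρ hR.ne', ← mem_closedBall_zero_iff] at this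
  have hfz : f z - z = z * (dslope f 0 z - 1) := by
    have := sub_smul_dslope f 0 z
    rw [sub_zero, hf0, sub_zero, smul_eq_mul] at this
    rw [mul_sub_one, this]
  rw [hfz, norm_mul, pow_two, mul_assoc, mul_div_assoc]
  gcongr
  exact norm_sub_one_le_of_mapsTo_closedBall hρ hq hqmaps (by rwa [dslope_same]) hz

theorem norm_deriv_sub_one_le_of_norm_sub_self_le {f : ℂ → ℂ} {c z : ℂ} {R δ ε : ℝ}
    (hδ : 0 < δ) (hf : DifferentiableOn ℂ f (closedBall c R))
    (hε : ∀ w ∈ closedBall c R, ‖f w - w‖ ≤ ε) (hz : z ∈ closedBall c (R - δ)) :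
    ‖deriv f z - 1‖ ≤ ε / δ := by
  have hdist : δ + dist z c ≤ R := by rw [mem_closedBall] at hz; linarith
  have hsub : closedBall z δ ⊆ closedBall c R := closedBall_subset_closedBall' hdist
  have hfz : DifferentiableAt ℂ f z :=
    hf.differentiableAt (closedBall_mem_nhds_of_mem (mem_ball.mpr (by linarith)))
  rw [← deriv_id z, ← deriv_sub hfz differentiableAt_id]
  exact Complex.norm_deriv_le_of_forall_mem_sphere_norm_le hδ
    (((hf.sub differentiableOn_id).mono (closure_ball_subset_closedBall.trans hsub)).diffContOnCl)
    fun w hw => hε w (hsub (sphere_subset_closedBall hw))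

theorem approximatesLinearOn_id_of_norm_deriv_sub_one_le {f : ℂ → ℂ} {s : Set ℂ} {c : ℝ≥0}
    (hs : Convex ℝ s) (hf : ∀ z ∈ s, DifferentiableAt ℂ f z)
    (hf' : ∀ z ∈ s, ‖deriv f z - 1‖ ≤ c) :
    ApproximatesLinearOn f (ContinuousLinearMap.id ℂ ℂ) s c := by
  intro x hx y hy
  have hg : ∀ z ∈ s, DifferentiableAt ℂ (f - id) z :=
    fun z hz => (hf z hz).sub differentiableAt_id
  have hg' : ∀ z ∈ s, ‖deriv (f - id) z‖ ≤ c := fun z hz => by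
    rw [deriv_sub (hf z hz) differentiableAt_id, deriv_id]
    exact hf' z hz
  have := hs.norm_image_sub_le_of_norm_deriv_le hg hg' hy hx
  simpa only [ContinuousLinearMap.id_apply, Pi.sub_apply, id_eq, sub_sub_sub_comm] using this

theorem exists_rightInverse_of_norm_deriv_sub_one_le {f : ℂ → ℂ} {b : ℂ} {a : ℝ} {c : ℝ≥0}
    (ha : 0 < a) (hc : c < 1) (hf : DifferentiableOn ℂ f (ball b a))
    (hf' : ∀ z ∈ ball b a, ‖deriv f z - 1‖ ≤ c) :
    ∃ φ : ℂ → ℂ, DifferentiableOn ℂ φ (ball (f b) ((1 - c) * a)) ∧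
      MapsTo φ (ball (f b) ((1 - c) * a)) (ball b a) ∧ φ (f b) = b ∧
      deriv φ (f b) = (deriv f b)⁻¹ ∧ ∀ z ∈ ball (f b) ((1 - c) * a), f (φ z) = z := by
  have hc' : (0 : ℝ) < 1 - c := sub_pos.mpr (by exact_mod_cast hc)
  have hfb : f b ∈ ball (f b) ((1 - c) * a) := mem_ball_self (by positivity)
  have hfa : ∀ z ∈ ball b a, DifferentiableAt ℂ f z :=
    fun z hz => hf.differentiableAt (isOpen_ball.mem_nhds hz)
  have happrox : ApproximatesLinearOn f
      ((ContinuousLinearEquiv.refl ℂ ℂ : ℂ ≃L[ℂ] ℂ) : ℂ →L[ℂ] ℂ) (ball b a) c :=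
    approximatesLinearOn_id_of_norm_deriv_sub_one_le (convex_ball b a) hfa hf'
  have hN : ‖((ContinuousLinearEquiv.refl ℂ ℂ).symm : ℂ →L[ℂ] ℂ)‖₊ = 1 := by
    simp
  have hcN : Subsingleton ℂ ∨ c < ‖((ContinuousLinearEquiv.refl ℂ ℂ).symm : ℂ →L[ℂ] ℂ)‖₊⁻¹ :=
    Or.inr (by rwa [hN, inv_one])
  set e := happrox.toOpenPartialHomeomorph f (ball b a) hcN isOpen_ball
  have htarget : ball (f b) ((1 - c) * a) ⊆ e.target := by
    intro z hz
    set ε := dist z (f b) / (1 - c)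
    have hε : closedBall b ε ⊆ ball b a :=
      closedBall_subset_ball ((div_lt_iff₀' hc').mpr (mem_ball.mp hz))
    have := happrox.closedBall_subset_target hcN isOpen_ball (by positivity) hε
    simp only [hN] at this
    apply this
    rw [mem_closedBall]
    norm_num [ε, mul_div_cancel₀ _ hc'.ne']
  have hderiv : ∀ z ∈ ball (f b) ((1 - c) * a), HasDerivAt e.symm (deriv f (e.symm z))⁻¹ z := by
    intro z hz
    have hmem : e.symm z ∈ ball b a := e.map_target (htarget hz)
    have hne : deriv f (e.symm z) ≠ 0 := fun h => by
      have := hf' _ hmem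
      rw [h, zero_sub, norm_neg, norm_one] at this
      exact (not_le.mpr hc) (by exact_mod_cast this)
    exact e.hasDerivAt_symm (htarget hz) hne (hfa _ hmem).hasDerivAt
  have hb : e.symm (f b) = b := e.left_inv (mem_ball_self ha)
  refine ⟨e.symm, fun z hz => (hderiv z hz).differentiableAt.differentiableWithinAt,
    fun z hz => e.map_target (htarget hz), hb, ?_, fun z hz => e.right_inv (htarget hz)⟩
  rw [(hderiv _ hfb).deriv, hb]

theorem stmt15 :
    ∃ A : ℝ, A < 2 ∧
      ∀ r : ℝ, A < r → r ≤ 2 →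
        ∀ Z₁ : ℂ → ℂ,
          DifferentiableOn ℂ Z₁ (ball (0 : ℂ) r) →
          Set.MapsTo Z₁ (ball (0 : ℂ) r) (ball (0 : ℂ) 2) →
          Z₁ 0 = 0 → deriv Z₁ 0 = 1 →
          ∃ φ : ℂ → ℂ,
            DifferentiableOn ℂ φ (ball (0 : ℂ) 1) ∧
            Set.MapsTo φ (ball (0 : ℂ) 1) (ball (0 : ℂ) r) ∧
            φ 0 = 0 ∧ deriv φ 0 ≠ 0 ∧
            ∀ z ∈ ball (0 : ℂ) 1, Z₁ (φ z) = z := by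
  refine ⟨1999 / 1000, by norm_num, fun r hr _ f hf hmaps hf0 hf'0 => ?_⟩
  have hball : closedBall (0 : ℂ) (7 / 4) ⊆ ball 0 r := closedBall_subset_ball (by linarith)
  have hnear : ∀ z ∈ closedBall (0 : ℂ) (7 / 4), ‖f z - z‖ ≤ 1 / 16 := fun z hz => by
    have hz' := mem_closedBall_zero_iff.mp hz
    refine (norm_sub_self_le_of_mapsTo_closedBall (ρ := 1001 / 1000) (by norm_num) hf
      (hmaps.mono_right (ball_subset_closedBall.trans (closedBall_subset_closedBall
        (by linarith)))) hf0 hf'0 (hball hz)).trans ?_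
    rw [div_le_iff₀ (by linarith)]
    nlinarith [norm_nonneg z]
  have hderiv : ∀ z ∈ ball (0 : ℂ) (3 / 2), ‖deriv f z - 1‖ ≤ (1 / 4 : ℝ≥0) := fun z hz => by
    have hz' : z ∈ closedBall (0 : ℂ) (7 / 4 - 1 / 4) :=
      ball_subset_closedBall (ball_subset_ball (by norm_num) hz)
    have := norm_deriv_sub_one_le_of_norm_sub_self_le (by norm_num) (hf.mono hball) hnear hz'
    exact this.trans_eq (by norm_num)
  obtain ⟨φ, hφ, hφmaps, hφ0, hφ', hφinv⟩ := exists_rightInverse_of_norm_deriv_sub_one_le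
    (by norm_num) (by norm_num) (hf.mono (ball_subset_ball (by linarith))) hderiv
  rw [hf0] at hφ hφmaps hφ0 hφ' hφinv
  have hsub : ball (0 : ℂ) 1 ⊆ ball 0 ((1 - (1 / 4 : ℝ≥0)) * (3 / 2)) :=
    ball_subset_ball (by norm_num)
  exact ⟨φ, hφ.mono hsub, (hφmaps.mono_left hsub).mono_right (ball_subset_ball (by linarith)),
    hφ0, by simp [hφ', hf'0], fun z hz => hφinv z (hsub hz)⟩
end
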